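/- No circuit all of whose channels are positive constant-delay channels solves Short-Pulse Filtration. That is, for every circuit with exactly one input port and exactly one output port in which every edge carries a constant-delay channel (with some positive delay and some initial value), the circuit cannot simultaneously satisfy conditions (F2), (F3), (F4) and (F5) of SPF. -/

import Mathlib

/-- A (binary, continuous-time) signal: it attains its new value at each transition time
(right-local constancy) and changes value only finitely often in every bounded
interval. -/
def IsSignal (s : ℝ → Bool) : Prop :=
  (∀ t : ℝ, ∃ ε > 0, ∀ u : ℝ, t ≤ u → u < t + ε → s u = s t) ∧
  (∀ a b : ℝ, {t : ℝ | a ≤ t ∧ t ≤ b ∧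
      ∀ ε > 0, ∃ u : ℝ, t - ε < u ∧ u < t ∧ s u ≠ s t}.Finite)

/-- The pulse of length `Δ` at time `T`: the signal that is `1` exactly on `[T, T+Δ)`. -/
noncomputable def Pulse (T Δ : ℝ) : ℝ → Bool := fun t => decide (T ≤ t ∧ t < T + Δ)

/-- `s` contains a pulse of length `Δ` at time `T`: two consecutive events `(T,1)` and
`(T+Δ,0)`. -/
def ContainsPulse (s : ℝ → Bool) (T Δ : ℝ) : Prop :=
  0 < Δ ∧ (∀ u : ℝ, T ≤ u → u < T + Δ → s u = true) ∧ s (T + Δ) = false ∧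
    ∃ ε > 0, ∀ u : ℝ, T - ε < u → u < T → s u = false

/-- The constant-delay channel with delay `d` and initial value `x`. -/
noncomputable def delayChannel (d : ℝ) (x : Bool) (s : ℝ → Bool) : ℝ → Bool :=
  fun t => if t < d then x else s (t - d)

/-- A circuit: a finite directed graph with input ports (in-degree 0), output ports
(in-degree 1, computing the identity), and Boolean gates; `preds v` is the ordered list
of in-neighbors of `v`, and `chan v k` is the channel on the `k`-th incoming edge
of `v`. -/
structure Circuit where
  V : Type
  [instFintype : Fintype V]
  [instDecEq : DecidableEq V]
  inp : V → Prop
  out : V → Prop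
  preds : V → List V
  gate : V → List Bool → Bool
  chan : V → ℕ → (ℝ → Bool) → ℝ → Bool
  inp_preds : ∀ v, inp v → preds v = []
  out_preds : ∀ v, out v → (preds v).length = 1
  out_gate : ∀ v, out v → ∀ l : List Bool, gate v l = l.headI
  inp_not_out : ∀ v, ¬ (inp v ∧ out v)

/-- An execution of a circuit: an assignment of a signal to every vertex such that every
non-input vertex computes its Boolean function of its channel-delayed inputs. -/
def Execution (C : Circuit) (s : C.V → ℝ → Bool) : Prop :=
  (∀ v, IsSignal (s v)) ∧
  ∀ v, ¬ C.inp v → ∀ t : ℝ,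
    s v t = C.gate v (((C.preds v).zipIdx).map fun p => C.chan v p.2 (s p.1) t)


namespace SPF0

/-- `t` is a transition point of `s`. -/
def IsTrans (s : ℝ → Bool) (t : ℝ) : Prop :=
  ∀ ε > 0, ∃ u : ℝ, t - ε < u ∧ u < t ∧ s u ≠ s t

lemma trans_finite {s : ℝ → Bool} (hs : IsSignal s) (a b : ℝ) :
    {t : ℝ | a ≤ t ∧ t ≤ b ∧ IsTrans s t}.Finite := hs.2 a b

/-- Between two points with different values there is a transition point. -/
lemma exists_trans_between {s : ℝ → Bool}
    (hR : ∀ t : ℝ, ∃ ε > 0, ∀ u : ℝ, t ≤ u → u < t + ε → s u = s t)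
    {u u' : ℝ} (huu : u < u') (hne : s u ≠ s u') :
    ∃ w, u < w ∧ w ≤ u' ∧ IsTrans s w := by
  classical
  set Z : Set ℝ := {x | x ∈ Set.Icc u u' ∧ s x ≠ s u'} with hZ
  have hZu : u ∈ Z := ⟨⟨le_refl u, le_of_lt huu⟩, hne⟩
  have hZne : Z.Nonempty := ⟨u, hZu⟩
  have hbdd : BddAbove Z := ⟨u', fun x hx => hx.1.2⟩
  set w := sSup Z with hw
  have hwu : u ≤ w := le_csSup hbdd hZu
  have hwu' : w ≤ u' := csSup_le hZne (fun x hx => hx.1.2)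
  have hsw : s w = s u' := by
    by_contra h
    have hwlt : w < u' := lt_of_le_of_ne hwu' (fun he => h (he ▸ rfl))
    obtain ⟨η, hη, hconst⟩ := hR w
    set x := min (w + η / 2) u' with hx
    have hxw : w < x := lt_min (by linarith) hwlt
    have hxmem : x ∈ Z := by
      constructor
      · exact ⟨le_trans hwu (le_of_lt hxw), min_le_right _ _⟩
      · have : s x = s w := hconst x (le_of_lt hxw)
          (lt_of_le_of_lt (min_le_left _ _) (by linarith))
        rw [this]; exact h
    exact absurd (le_csSup hbdd hxmem) (not_le.mpr hxw)
  have hwne : u ≠ w := fun he => hne (by rw [he, hsw])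
  refine ⟨w, lt_of_le_of_ne hwu hwne, hwu', ?_⟩
  intro ε hε
  obtain ⟨z, hzZ, hzlt⟩ := exists_lt_of_lt_csSup hZne (show w - ε < w by linarith)
  have hzle : z ≤ w := le_csSup hbdd hzZ
  have hzne : z ≠ w := fun he => hzZ.2 (he ▸ hsw)
  exact ⟨z, hzlt, lt_of_le_of_ne hzle hzne, by rw [hsw]; exact hzZ.2⟩

/-- A signal is eventually constant on the left of any point. -/
lemma eventually_left_const {s : ℝ → Bool} (hs : IsSignal s) (a : ℝ) :
    ∃ ε > 0, ∀ x y : ℝ, a - ε < x → x ≤ y → y < a → s x = s y := by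
  classical
  have hfin : {t : ℝ | a - 1 ≤ t ∧ t ≤ a ∧ IsTrans s t}.Finite := trans_finite hs (a-1) a
  set T : Set ℝ := {t : ℝ | a - 1 ≤ t ∧ t ≤ a ∧ IsTrans s t} ∩ Set.Iio a with hT
  have hTfin : T.Finite := hfin.subset (Set.inter_subset_left)
  by_cases hne : T.Nonempty
  · obtain ⟨m, hmT, hm⟩ := Set.Finite.exists_maximalFor id T hTfin hne
    have hma : m < a := hmT.2
    refine ⟨a - m, by linarith, ?_⟩
    intro x y hx hxy hya
    by_contra hne2
    have hxy' : x < y := lt_of_le_of_ne hxy (fun he => hne2 (he ▸ rfl))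
    obtain ⟨w, hw1, hw2, hw3⟩ := exists_trans_between hs.1 hxy' hne2
    have hwa : w < a := lt_of_le_of_lt hw2 hya
    have hm1 : a - 1 ≤ m := hmT.1.1
    have hwm : m < w := by linarith
    have hwT : w ∈ T := ⟨⟨by linarith, le_of_lt hwa, hw3⟩, hwa⟩
    have := hm hwT (le_of_lt hwm)
    simp only [id] at this
    exact absurd this (not_le.mpr hwm)
  · refine ⟨1, one_pos, ?_⟩
    intro x y hx hxy hya
    by_contra hne2
    have hxy' : x < y := lt_of_le_of_ne hxy (fun he => hne2 (he ▸ rfl))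
    obtain ⟨w, hw1, hw2, hw3⟩ := exists_trans_between hs.1 hxy' hne2
    exact hne ⟨w, ⟨by linarith [lt_of_le_of_lt hw2 hya], le_of_lt (lt_of_le_of_lt hw2 hya), hw3⟩,
      lt_of_le_of_lt hw2 hya⟩

open MeasureTheory

lemma bool_ne_true {b : Bool} (h : ¬ b = true) : b = false := by
  cases b <;> simp_all

lemma bool_ne_false {b : Bool} (h : ¬ b = false) : b = true := by
  cases b <;> simp_all

variable {s : ℝ → Bool} {ε : ℝ}

lemma run_lemma (hs : IsSignal s) (hneg : ∀ u : ℝ, u < 0 → s u = false)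
    (hF5 : ∀ T Δ : ℝ, Δ < ε → ¬ ContainsPulse s T Δ)
    {t' M : ℝ} (h1 : s t' = true) (hM : t' ≤ M) :
    (∀ u, t' ≤ u → u ≤ M → s u = true) ∨
    (∃ ra rb : ℝ, 0 ≤ ra ∧ ra + ε ≤ rb ∧ rb ≤ M ∧ ∀ u, ra ≤ u → u < rb → s u = true) := by
  classical
  have ht0 : 0 ≤ t' := by
    by_contra h
    push_neg at h
    rw [hneg t' h] at h1; exact absurd h1 (by simp)
  by_cases hall : ∀ u, t' ≤ u → u ≤ M → s u = true
  · exact Or.inl hall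
  push_neg at hall
  obtain ⟨u₀, hu₀1, hu₀2, hu₀3⟩ := hall
  have hu₀f : s u₀ = false := bool_ne_true hu₀3
  set Z : Set ℝ := {u | t' < u ∧ s u = false} with hZdef
  have hu₀Z : u₀ ∈ Z := by
    refine ⟨lt_of_le_of_ne hu₀1 ?_, hu₀f⟩
    intro he; rw [← he] at hu₀f; rw [h1] at hu₀f; exact absurd hu₀f (by simp)
  have hZne : Z.Nonempty := ⟨u₀, hu₀Z⟩
  have hZbdd : BddBelow Z := ⟨t', fun z hz => le_of_lt hz.1⟩
  set rb := sInf Z with hrbdef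
  have hrbM : rb ≤ M := le_trans (csInf_le hZbdd hu₀Z) hu₀2
  obtain ⟨η, hη, hconst⟩ := hs.1 t'
  have hZlb : ∀ z ∈ Z, t' + η ≤ z := by
    intro z hz
    by_contra h
    push_neg at h
    have := hconst z (le_of_lt hz.1) h
    rw [h1] at this; rw [hz.2] at this; exact absurd this (by simp)
  have hrb_gt : t' + η ≤ rb := le_csInf hZne hZlb
  obtain ⟨η₂, hη₂, hc₂⟩ := hs.1 rb
  obtain ⟨z, hzZ, hzlt⟩ := exists_lt_of_csInf_lt hZne (show sInf Z < rb + η₂ by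
    rw [← hrbdef]; linarith)
  have hzrb : rb ≤ z := csInf_le hZbdd hzZ
  have hsrb : s rb = false := by rw [← hc₂ z hzrb hzlt]; exact hzZ.2
  have hones2 : ∀ u, t' ≤ u → u < rb → s u = true := by
    intro u hu1 hu2
    rcases eq_or_lt_of_le hu1 with he | hlt
    · rwa [← he]
    · have huZ : u ∉ Z := fun hu => absurd (csInf_le hZbdd hu) (not_le.mpr hu2)
      have : ¬ (s u = false) := fun hf => huZ ⟨hlt, hf⟩
      exact bool_ne_false this
  set W : Set ℝ := {u | ∀ w, u ≤ w → w ≤ t' → s w = true} with hWdef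
  have ht'W : t' ∈ W := by
    intro w hw1 hw2
    have : w = t' := le_antisymm hw2 hw1
    rwa [this]
  have hWne : W.Nonempty := ⟨t', ht'W⟩
  have hWlow : ∀ u ∈ W, (0:ℝ) ≤ u := by
    intro u hu
    by_contra h
    push_neg at h
    have := hu u le_rfl (by linarith)
    rw [hneg u h] at this; exact absurd this (by simp)
  have hWbdd : BddBelow W := ⟨0, hWlow⟩
  set ra := sInf W with hradef
  have hra0 : 0 ≤ ra := le_csInf hWne hWlow
  have hrat' : ra ≤ t' := csInf_le hWbdd ht'W
  have hones1 : ∀ x, ra < x → x ≤ t' → s x = true := by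
    intro x hx1 hx2
    obtain ⟨u, huW, hux⟩ := exists_lt_of_csInf_lt hWne (show sInf W < x from hx1)
    exact huW x (le_of_lt hux) hx2
  have hsra : s ra = true := by
    rcases eq_or_lt_of_le hrat' with he | hlt
    · rwa [he]
    · obtain ⟨η₃, hη₃, hc₃⟩ := hs.1 ra
      have hx1 : ra < min (ra + η₃/2) t' := lt_min (by linarith) hlt
      have := hc₃ (min (ra + η₃/2) t') (le_of_lt hx1)
        (lt_of_le_of_lt (min_le_left _ _) (by linarith))
      rw [← this]
      exact hones1 _ hx1 (min_le_right _ _)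
  have hOnes : ∀ u, ra ≤ u → u < rb → s u = true := by
    intro u hu1 hu2
    rcases le_or_gt u t' with h | h
    · rcases eq_or_lt_of_le hu1 with he | hlt
      · rwa [← he]
      · exact hones1 u hlt h
    · exact hones2 u (le_of_lt h) hu2
  have hzeros : ∀ γ : ℝ, 0 < γ → ∃ z, ra - γ < z ∧ z < ra ∧ s z = false := by
    intro γ hγ
    have hnotW : (ra - γ/2) ∉ W := by
      intro hmem
      have := csInf_le hWbdd hmem
      rw [← hradef] at this; linarith
    simp only [hWdef, Set.mem_setOf_eq] at hnotW
    push_neg at hnotW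
    obtain ⟨w, hw1, hw2, hw3⟩ := hnotW
    have hwf : s w = false := bool_ne_true hw3
    have hwra : w < ra := by
      by_contra h
      push_neg at h
      rw [hOnes w h (by linarith [hrb_gt])] at hwf
      exact absurd hwf (by simp)
    exact ⟨w, by linarith, hwra, hwf⟩
  obtain ⟨ε₄, hε₄, hc₄⟩ := eventually_left_const hs ra
  have hlz : ∀ u, ra - ε₄ < u → u < ra → s u = false := by
    intro u hu1 hu2
    have hγ : 0 < ra - max u (ra - ε₄) := by
      apply sub_pos.mpr
      apply max_lt hu2 (by linarith)
    obtain ⟨z, hz1, hz2, hz3⟩ := hzeros _ hγ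
    have hzu : max u (ra - ε₄) < z := by linarith [hz1]
    have hz4 : ra - ε₄ < z := lt_of_le_of_lt (le_max_right _ _) hzu
    rcases le_total u z with h | h
    · rw [hc₄ u z hu1 h hz2]; exact hz3
    · rw [← hc₄ z u hz4 h hu2]; exact hz3
  have hεrb : ra + ε ≤ rb := by
    by_contra h
    push_neg at h
    refine hF5 ra (rb - ra) (by linarith) ?_
    have hrge : ra + (rb - ra) = rb := by ring
    refine ⟨by linarith, ?_, ?_, ⟨ε₄, hε₄, fun u h1 h2 => hlz u h1 h2⟩⟩
    · intro u hu1 hu2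
      rw [hrge] at hu2
      exact hOnes u hu1 hu2
    · rw [hrge]; exact hsrb
  exact Or.inr ⟨ra, rb, hra0, hεrb, hrbM, hOnes⟩

lemma one_set_structure (hs : IsSignal s) (hneg : ∀ u : ℝ, u < 0 → s u = false)
    (hF5 : ∀ T Δ : ℝ, Δ < ε → ¬ ContainsPulse s T Δ) {M : ℝ}
    (hvol_pos : 0 < (volume {u : ℝ | s u = true ∧ u ∈ Set.Icc 0 M}).toReal)
    (hvol_lt : (volume {u : ℝ | s u = true ∧ u ∈ Set.Icc 0 M}).toReal < ε) :
    ∃ a : ℝ, 0 ≤ a ∧ a < M ∧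
      {u : ℝ | s u = true ∧ u ∈ Set.Icc 0 M} = Set.Icc a M ∧
      (∀ u, u < a → s u = false) ∧ IsTrans s a := by
  classical
  set O : Set ℝ := {u : ℝ | s u = true ∧ u ∈ Set.Icc 0 M} with hOdef
  have hε : 0 < ε := lt_trans hvol_pos hvol_lt
  have hOsub : O ⊆ Set.Icc 0 M := fun u hu => hu.2
  have hOfin : volume O ≠ ⊤ := by
    refine ne_top_of_le_ne_top ?_ (measure_mono hOsub)
    rw [Real.volume_Icc]; exact ENNReal.ofReal_ne_top
  have hne : O.Nonempty := by
    rcases Set.eq_empty_or_nonempty O with he | h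
    · rw [he] at hvol_pos; simp at hvol_pos
    · exact h
  have hrun : ∀ t' ∈ O, ∀ u, t' ≤ u → u ≤ M → s u = true := by
    intro t' ht' u hu1 hu2
    rcases run_lemma hs hneg hF5 ht'.1 ht'.2.2 with h | ⟨ra, rb, h0, hab, hbM, hone⟩
    · exact h u hu1 hu2
    · exfalso
      have hsub : Set.Ico ra rb ⊆ O := by
        intro x hx
        exact ⟨hone x hx.1 hx.2, le_trans h0 hx.1, le_trans (le_of_lt hx.2) hbM⟩
      have hv : ENNReal.ofReal (rb - ra) ≤ volume O := by
        rw [← Real.volume_Ico]; exact measure_mono hsub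
      have : rb - ra ≤ (volume O).toReal := by
        rw [← ENNReal.toReal_ofReal (show (0:ℝ) ≤ rb - ra by linarith)]
        exact ENNReal.toReal_mono hOfin hv
      linarith
  set a := sInf O with hadef
  have hObdd : BddBelow O := ⟨0, fun u hu => hu.2.1⟩
  have hra0 : 0 ≤ a := le_csInf hne (fun u hu => hu.2.1)
  have haM : a < M := by
    by_contra h
    push_neg at h
    have hsub : O ⊆ {M} := by
      intro u hu
      have h1 : a ≤ u := csInf_le hObdd hu
      have h2 : u ≤ M := hu.2.2
      simp only [Set.mem_singleton_iff]
      linarith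
    have hm : volume O ≤ volume ({M} : Set ℝ) := measure_mono hsub
    rw [Real.volume_singleton] at hm
    have : volume O = 0 := le_antisymm hm (zero_le')
    rw [this] at hvol_pos; simp at hvol_pos
  have hub : ∀ x, a < x → x ≤ M → s x = true := by
    intro x hx hxM
    obtain ⟨t', ht'O, ht'x⟩ := exists_lt_of_csInf_lt hne hx
    exact hrun t' ht'O x (le_of_lt ht'x) hxM
  have hsa : s a = true := by
    obtain ⟨η, hη, hc⟩ := hs.1 a
    have hx1 : a < min (a + η/2) M := lt_min (by linarith) haM
    rw [← hc (min (a + η/2) M) (le_of_lt hx1)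
      (lt_of_le_of_lt (min_le_left _ _) (by linarith))]
    exact hub _ hx1 (min_le_right _ _)
  have hOeq : O = Set.Icc a M := by
    ext u
    constructor
    · intro hu
      exact ⟨csInf_le hObdd hu, hu.2.2⟩
    · intro hu
      refine ⟨?_, le_trans hra0 hu.1, hu.2⟩
      rcases eq_or_lt_of_le hu.1 with he | hlt
      · rwa [← he]
      · exact hub u hlt hu.2
  have hzero : ∀ u, u < a → s u = false := by
    intro u hu
    rcases lt_or_ge u 0 with h | h
    · exact hneg u h
    · have : u ∉ O := by
        rw [hOeq]; intro hmem; exact absurd hmem.1 (not_le.mpr hu)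
      rw [hOdef] at this
      apply bool_ne_true
      intro htrue
      exact this ⟨htrue, h, by linarith⟩
  refine ⟨a, hra0, haM, hOeq, hzero, ?_⟩
  intro γ hγ
  refine ⟨a - γ/2, by linarith, by linarith, ?_⟩
  rw [hzero _ (by linarith), hsa]; simp
end SPF0

noncomputable section CircuitPart

namespace SPF0

attribute [local instance] Classical.propDecidable

/-- Bounded-depth path-delay sums from inputs to `v`. -/
def PDn (C : Circuit) (d : C.V → ℕ → ℝ) : ℕ → C.V → Finset ℝ
  | 0, _ => ∅
  | (n+1), v =>
    (if C.inp v then {0} else ∅) ∪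
      ((C.preds v).zipIdx.toFinset.biUnion fun p =>
        (PDn C d n p.1).image (fun x => x + d v p.2))

/-- Potential transition times not tracking the pulse end. -/
def K0n (C : Circuit) (d : C.V → ℕ → ℝ) (T₀ : ℝ) : ℕ → C.V → Finset ℝ
  | 0, _ => ∅
  | (n+1), v =>
    (if C.inp v then {T₀} else ∅) ∪
      ((C.preds v).zipIdx.toFinset.biUnion fun p =>
        {d v p.2} ∪ (K0n C d T₀ n p.1).image (fun x => x + d v p.2))

/-- Potential transition times tracking the pulse end (to be shifted by `Δ`). -/
def K1n (C : Circuit) (d : C.V → ℕ → ℝ) (T₀ : ℝ) : ℕ → C.V → Finset ℝ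
  | 0, _ => ∅
  | (n+1), v =>
    (if C.inp v then {T₀} else ∅) ∪
      ((C.preds v).zipIdx.toFinset.biUnion fun p =>
        (K1n C d T₀ n p.1).image (fun x => x + d v p.2))

/-- Bounded-depth approximation of the zero-input execution. -/
def zg (C : Circuit) (d : C.V → ℕ → ℝ) (b : C.V → ℕ → Bool) : ℕ → C.V → ℝ → Bool
  | 0, _, _ => false
  | (n+1), v, t =>
    if C.inp v then false
    else C.gate v (((C.preds v).zipIdx).map fun p =>
      if t < d v p.2 then b v p.2 else zg C d b n p.1 (t - d v p.2))

/-- Potential transition times of the zero-input execution. -/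
def Sn (C : Circuit) (d : C.V → ℕ → ℝ) : ℕ → C.V → Finset ℝ
  | 0, _ => ∅
  | (n+1), v =>
    (C.preds v).zipIdx.toFinset.biUnion fun p =>
      {d v p.2} ∪ (Sn C d n p.1).image (fun x => x + d v p.2)

variable {C : Circuit} {d : C.V → ℕ → ℝ} {b : C.V → ℕ → Bool} {i : C.V} {dm : ℝ}

lemma map_ne_exists {α β : Type*} {l : List α} {f g : α → β}
    (h : l.map f ≠ l.map g) : ∃ a ∈ l, f a ≠ g a := by
  by_contra hc
  push_neg at hc
  exact h (List.map_congr_left hc)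

lemma exec_eq
    (hd : ∀ v k, k < (C.preds v).length → 0 < d v k ∧ C.chan v k = delayChannel (d v k) (b v k))
    {s : C.V → ℝ → Bool} (hs : Execution C s) {v : C.V} (hv : ¬ C.inp v) (t : ℝ) :
    s v t = C.gate v (((C.preds v).zipIdx).map fun p =>
      if t < d v p.2 then b v p.2 else s p.1 (t - d v p.2)) := by
  rw [hs.2 v hv t]
  congr 1
  apply List.map_congr_left
  intro p hp
  rw [(hd v p.2 (List.snd_lt_of_mem_zipIdx hp)).2]
  rfl

lemma exec_neg
    (hd : ∀ v k, k < (C.preds v).length → 0 < d v k ∧ C.chan v k = delayChannel (d v k) (b v k))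
    {s : C.V → ℝ → Bool} (hs : Execution C s) {v : C.V} (hv : ¬ C.inp v) {t : ℝ} (ht : t < 0) :
    s v t = C.gate v (((C.preds v).zipIdx).map fun p => b v p.2) := by
  rw [exec_eq hd hs hv t]
  congr 1
  apply List.map_congr_left
  intro p hp
  rw [if_pos (lt_of_lt_of_le ht (le_of_lt (hd v p.2 (List.snd_lt_of_mem_zipIdx hp)).1))]

/-- Two executions differing only on input times in `X` differ at `v` at time `t`
only if `t - δ ∈ X` for some path delay `δ`. -/
lemma dep
    (hd : ∀ v k, k < (C.preds v).length → 0 < d v k ∧ C.chan v k = delayChannel (d v k) (b v k))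
    (hdm0 : 0 < dm)
    (hdml : ∀ v k, k < (C.preds v).length → dm ≤ d v k)
    (hiu : ∀ v, C.inp v → v = i)
    {s s' : C.V → ℝ → Bool} (hs : Execution C s) (hs' : Execution C s')
    (X : Set ℝ) (hX : ∀ u : ℝ, u ∉ X → s i u = s' i u) :
    ∀ n : ℕ, ∀ v : C.V, ∀ t : ℝ, 0 ≤ t → t < (n : ℝ) * dm →
      s v t ≠ s' v t → ∃ δ ∈ PDn C d n v, t - δ ∈ X := by
  intro n
  induction n with
  | zero => intro v t ht0 htn; simp at htn; intro; linarith
  | succ n ih =>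
    intro v t ht0 htn hne
    by_cases hv : C.inp v
    · have hvi : v = i := hiu v hv
      subst hvi
      refine ⟨0, ?_, ?_⟩
      · simp [PDn, if_pos hv]
      · by_contra h
        exact hne (hX t (by simpa using h))
    · rw [exec_eq hd hs hv t, exec_eq hd hs' hv t] at hne
      have hmapne := map_ne_exists (fun h => hne (by rw [h]))
      obtain ⟨p, hp, hpne⟩ := hmapne
      have hk := List.snd_lt_of_mem_zipIdx hp
      by_cases hlt : t < d v p.2
      · rw [if_pos hlt, if_pos hlt] at hpne; exact absurd rfl hpne
      · rw [if_neg hlt, if_neg hlt] at hpne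
        push_neg at hlt
        have hddm : dm ≤ d v p.2 := hdml v p.2 hk
        have h1 : (0:ℝ) ≤ t - d v p.2 := by linarith
        have h2 : t - d v p.2 < (n : ℝ) * dm := by
          push_cast at htn; linarith
        obtain ⟨δ, hδmem, hδX⟩ := ih p.1 (t - d v p.2) h1 h2 hpne
        refine ⟨δ + d v p.2, ?_, ?_⟩
        · show δ + d v p.2 ∈ PDn C d (n+1) v
          rw [PDn]
          apply Finset.mem_union_right
          apply Finset.mem_biUnion.mpr
          exact ⟨p, List.mem_toFinset.mpr hp, Finset.mem_image.mpr ⟨δ, hδmem, rfl⟩⟩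
        · have : t - (δ + d v p.2) = t - d v p.2 - δ := by ring
          rw [this]; exact hδX

lemma pulse_const {T₀ Δ t t' : ℝ} (h : t' ≤ t)
    (h0 : T₀ ∉ Set.Ioc t' t) (h1 : T₀ + Δ ∉ Set.Ioc t' t) :
    Pulse T₀ Δ t' = Pulse T₀ Δ t := by
  simp only [Set.mem_Ioc, not_and, not_le] at h0 h1
  unfold Pulse
  rcases lt_or_ge t T₀ with hc | hc
  · simp only [decide_eq_decide]
    constructor
    · rintro ⟨ha, -⟩; exact absurd ha (by linarith)
    · rintro ⟨ha, -⟩; exact absurd ha (by linarith)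
  · have ht' : T₀ ≤ t' := by
      by_contra hh; push_neg at hh; have := h0 hh; linarith
    rcases lt_or_ge t (T₀ + Δ) with hc2 | hc2
    · simp only [decide_eq_decide]
      constructor
      · rintro -; exact ⟨hc, hc2⟩
      · rintro -; exact ⟨ht', by linarith⟩
    · have ht'2 : T₀ + Δ ≤ t' := by
        by_contra hh; push_neg at hh; have := h1 hh; linarith
      simp only [decide_eq_decide]
      constructor
      · rintro ⟨-, ha⟩; exact absurd ha (by linarith)
      · rintro ⟨-, ha⟩; exact absurd ha (by linarith)

/-- Values of an execution with pulse input are constant between potential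
transition times. -/
lemma trconst
    (hd : ∀ v k, k < (C.preds v).length → 0 < d v k ∧ C.chan v k = delayChannel (d v k) (b v k))
    (hdm0 : 0 < dm)
    (hdml : ∀ v k, k < (C.preds v).length → dm ≤ d v k)
    (hiu : ∀ v, C.inp v → v = i)
    {T₀ Δ : ℝ} (hT₀ : 0 ≤ T₀)
    {s : C.V → ℝ → Bool} (hs : Execution C s) (hsi : s i = Pulse T₀ Δ) :
    ∀ n : ℕ, ∀ v : C.V, ∀ t t' : ℝ, t' ≤ t → t < (n : ℝ) * dm →
      (∀ c ∈ K0n C d T₀ n v, c ∉ Set.Ioc t' t) →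
      (∀ c ∈ K1n C d T₀ n v, c + Δ ∉ Set.Ioc t' t) →
      s v t' = s v t := by
  intro n
  induction n with
  | zero =>
    intro v t t' htt htn hK0 hK1
    simp at htn
    by_cases hv : C.inp v
    · have hvi : v = i := hiu v hv
      subst hvi
      rw [hsi]
      unfold Pulse
      simp only [decide_eq_decide]
      constructor
      · rintro ⟨ha, -⟩; exact absurd ha (by linarith)
      · rintro ⟨ha, -⟩; exact absurd ha (by linarith)
    · rw [exec_neg hd hs hv (by linarith : t' < 0), exec_neg hd hs hv htn]
  | succ n ih =>
    intro v t t' htt htn hK0 hK1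
    by_cases hv : C.inp v
    · have hvi : v = i := hiu v hv
      subst hvi
      rw [hsi]
      refine pulse_const htt (hK0 T₀ ?_) (hK1 T₀ ?_)
      · rw [K0n]; exact Finset.mem_union_left _ (by simp [if_pos hv])
      · rw [K1n]; exact Finset.mem_union_left _ (by simp [if_pos hv])
    · rw [exec_eq hd hs hv t, exec_eq hd hs hv t']
      congr 1
      apply List.map_congr_left
      intro p hp
      have hk := List.snd_lt_of_mem_zipIdx hp
      have hdmem : d v p.2 ∈ K0n C d T₀ (n+1) v := by
        rw [K0n]
        apply Finset.mem_union_right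
        apply Finset.mem_biUnion.mpr
        exact ⟨p, List.mem_toFinset.mpr hp, Finset.mem_union_left _ (Finset.mem_singleton_self _)⟩
      by_cases hlt : t < d v p.2
      · rw [if_pos hlt, if_pos (lt_of_le_of_lt htt hlt)]
      · push_neg at hlt
        have hlt' : d v p.2 ≤ t' := by
          by_contra hh
          push_neg at hh
          exact hK0 (d v p.2) hdmem ⟨hh, hlt⟩
        rw [if_neg (not_lt.mpr hlt), if_neg (not_lt.mpr hlt')]
        apply ih p.1 (t - d v p.2) (t' - d v p.2) (by linarith)
        · have hddm : dm ≤ d v p.2 := hdml v p.2 hk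
          push_cast at htn ⊢; linarith
        · intro c hc hmem
          have hcmem : c + d v p.2 ∈ K0n C d T₀ (n+1) v := by
            rw [K0n]
            apply Finset.mem_union_right
            apply Finset.mem_biUnion.mpr
            exact ⟨p, List.mem_toFinset.mpr hp,
              Finset.mem_union_right _ (Finset.mem_image.mpr ⟨c, hc, rfl⟩)⟩
          apply hK0 (c + d v p.2) hcmem
          simp only [Set.mem_Ioc] at hmem ⊢
          constructor <;> linarith [hmem.1, hmem.2]
        · intro c hc hmem
          have hcmem : c + d v p.2 ∈ K1n C d T₀ (n+1) v := by
            rw [K1n]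
            apply Finset.mem_union_right
            apply Finset.mem_biUnion.mpr
            exact ⟨p, List.mem_toFinset.mpr hp, Finset.mem_image.mpr ⟨c, hc, rfl⟩⟩
          apply hK1 (c + d v p.2) hcmem
          simp only [Set.mem_Ioc] at hmem ⊢
          constructor <;> linarith [hmem.1, hmem.2]

lemma finset_gap (F : Finset ℝ) {a : ℝ} (ha : a ∉ F) :
    ∃ γ > 0, ∀ c ∈ F, c ∉ Set.Ioc (a - γ) a := by
  classical
  set P := F.filter (fun x => x < a) with hP
  by_cases hne : P.Nonempty
  · have hmax := P.max'_mem hne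
    have hmaxlt : P.max' hne < a := (Finset.mem_filter.mp hmax).2
    refine ⟨a - P.max' hne, by linarith, ?_⟩
    intro c hc hmem
    simp only [Set.mem_Ioc] at hmem
    rcases eq_or_lt_of_le hmem.2 with he | hlt
    · exact ha (he ▸ hc)
    · have : c ∈ P := Finset.mem_filter.mpr ⟨hc, hlt⟩
      have := Finset.le_max' P c this
      linarith [hmem.1]
  · refine ⟨1, one_pos, ?_⟩
    intro c hc hmem
    simp only [Set.mem_Ioc] at hmem
    rcases eq_or_lt_of_le hmem.2 with he | hlt
    · exact ha (he ▸ hc)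
    · exact hne ⟨c, Finset.mem_filter.mpr ⟨hc, hlt⟩⟩

lemma finset_sep (F : Finset ℝ) (x : ℝ) :
    ∃ ρ > 0, ∀ c ∈ F, c ≠ x → ρ ≤ |c - x| := by
  classical
  set P := (F.image (fun c => |c - x|)).filter (fun y => 0 < y) with hP
  by_cases hne : P.Nonempty
  · refine ⟨P.min' hne, (Finset.mem_filter.mp (P.min'_mem hne)).2, ?_⟩
    intro c hc hcx
    apply Finset.min'_le
    refine Finset.mem_filter.mpr ⟨Finset.mem_image.mpr ⟨c, hc, rfl⟩, ?_⟩
    simp [sub_eq_zero, hcx]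
  · refine ⟨1, one_pos, ?_⟩
    intro c hc hcx
    exfalso
    apply hne
    refine ⟨|c - x|, Finset.mem_filter.mpr ⟨Finset.mem_image.mpr ⟨c, hc, rfl⟩, ?_⟩⟩
    simp [sub_eq_zero, hcx]

lemma zg_succ_def (n : ℕ) (v : C.V) (t : ℝ) :
    zg C d b (n+1) v t = if C.inp v then false
      else C.gate v (((C.preds v).zipIdx).map fun p =>
        if t < d v p.2 then b v p.2 else zg C d b n p.1 (t - d v p.2)) := rfl

lemma zg_succ (hdm0 : 0 < dm) (hdml : ∀ v k, k < (C.preds v).length → dm ≤ d v k) :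
    ∀ n : ℕ, ∀ v : C.V, ∀ t : ℝ, t < ((n:ℝ)+1) * dm →
      zg C d b (n+1) v t = zg C d b (n+2) v t := by
  intro n
  induction n with
  | zero =>
    intro v t ht
    rw [zg_succ_def, zg_succ_def]
    by_cases hv : C.inp v
    · rw [if_pos hv, if_pos hv]
    · rw [if_neg hv, if_neg hv]
      congr 1
      apply List.map_congr_left
      intro p hp
      have hlt : t < d v p.2 := by
        have := hdml v p.2 (List.snd_lt_of_mem_zipIdx hp)
        simp only [Nat.cast_zero, zero_add, one_mul] at ht
        linarith
      rw [if_pos hlt, if_pos hlt]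
  | succ n ih =>
    intro v t ht
    rw [zg_succ_def (n+1), zg_succ_def (n+2)]
    by_cases hv : C.inp v
    · rw [if_pos hv, if_pos hv]
    · rw [if_neg hv, if_neg hv]
      congr 1
      apply List.map_congr_left
      intro p hp
      by_cases hlt : t < d v p.2
      · rw [if_pos hlt, if_pos hlt]
      · rw [if_neg hlt, if_neg hlt]
        apply ih p.1 (t - d v p.2)
        have hdp : dm ≤ d v p.2 := hdml v p.2 (List.snd_lt_of_mem_zipIdx hp)
        push_cast at ht ⊢
        linarith

lemma zg_stab (hdm0 : 0 < dm) (hdml : ∀ v k, k < (C.preds v).length → dm ≤ d v k) :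
    ∀ k n : ℕ, ∀ v : C.V, ∀ t : ℝ, t < ((n:ℝ)+1) * dm →
      zg C d b (n+1) v t = zg C d b (n+1+k) v t := by
  intro k
  induction k with
  | zero => intro n v t _; rfl
  | succ k ih =>
    intro n v t ht
    rw [ih n v t ht]
    have h0 : (0:ℝ) ≤ (k:ℝ) * dm := mul_nonneg (Nat.cast_nonneg k) (le_of_lt hdm0)
    have := zg_succ (C := C) (d := d) (b := b) hdm0 hdml (n+k) v t
      (by push_cast at ht ⊢; nlinarith)
    rw [show n+1+k = n+k+1 by omega, show n+1+(k+1) = n+k+2 by omega]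
    exact this

def zeroExec (C : Circuit) (d : C.V → ℕ → ℝ) (b : C.V → ℕ → Bool) (dm : ℝ) :
    C.V → ℝ → Bool := fun v t => zg C d b (⌈t / dm⌉₊ + 1) v t

lemma nat_ceil_bound (hdm0 : 0 < dm) (t : ℝ) : t < ((⌈t / dm⌉₊ : ℝ) + 1) * dm := by
  have h1 : t / dm ≤ (⌈t / dm⌉₊ : ℝ) := Nat.le_ceil _
  have h2 : t ≤ (⌈t / dm⌉₊ : ℝ) * dm := (div_le_iff₀ hdm0).mp h1
  nlinarith

lemma zg_eq_of_lt (hdm0 : 0 < dm) (hdml : ∀ v k, k < (C.preds v).length → dm ≤ d v k)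
    {n m : ℕ} {v : C.V} {t : ℝ} (hn : t < ((n:ℝ)+1) * dm) (hm : t < ((m:ℝ)+1) * dm) :
    zg C d b (n+1) v t = zg C d b (m+1) v t := by
  rcases le_total n m with h | h
  · rw [zg_stab hdm0 hdml (m - n) n v t hn, show n+1+(m-n) = m+1 by omega]
  · rw [zg_stab hdm0 hdml (n - m) m v t hm, show m+1+(n-m) = n+1 by omega]

lemma zeroExec_eq (hdm0 : 0 < dm) (hdml : ∀ v k, k < (C.preds v).length → dm ≤ d v k)
    {n : ℕ} {v : C.V} {t : ℝ} (h : t < ((n:ℝ)+1) * dm) :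
    zeroExec C d b dm v t = zg C d b (n+1) v t :=
  zg_eq_of_lt hdm0 hdml (nat_ceil_bound hdm0 t) h

lemma zeroExec_inp (hi : C.inp i) (t : ℝ) : zeroExec C d b dm i t = false := by
  unfold zeroExec
  rw [zg_succ_def, if_pos hi]

lemma zeroExec_gate
    (hd : ∀ v k, k < (C.preds v).length → 0 < d v k ∧ C.chan v k = delayChannel (d v k) (b v k))
    (hdm0 : 0 < dm) (hdml : ∀ v k, k < (C.preds v).length → dm ≤ d v k)
    {v : C.V} (hv : ¬ C.inp v) (t : ℝ) :
    zeroExec C d b dm v t =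
      C.gate v (((C.preds v).zipIdx).map fun p => C.chan v p.2 (zeroExec C d b dm p.1) t) := by
  set n := ⌈t / dm⌉₊ with hn
  have ht : t < ((n:ℝ)+1) * dm := nat_ceil_bound hdm0 t
  have ht2 : t < (((n+1:ℕ):ℝ)+1) * dm := by
    push_cast
    nlinarith
  rw [zeroExec_eq hdm0 hdml ht2, zg_succ_def, if_neg hv]
  congr 1
  apply List.map_congr_left
  intro p hp
  have hk := List.snd_lt_of_mem_zipIdx hp
  rw [(hd v p.2 hk).2]
  show (if t < d v p.2 then b v p.2 else zg C d b (n+1) p.1 (t - d v p.2)) =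
    (if t < d v p.2 then b v p.2 else zeroExec C d b dm p.1 (t - d v p.2))
  by_cases hlt : t < d v p.2
  · rw [if_pos hlt, if_pos hlt]
  · rw [if_neg hlt, if_neg hlt]
    have : t - d v p.2 < ((n:ℝ)+1) * dm := by
      have := (hd v p.2 hk).1
      linarith
    rw [zeroExec_eq hdm0 hdml this]

lemma exists_eta_list {α : Type*} (L : List α) (t : ℝ) (Q : α → ℝ → Bool)
    (h : ∀ p ∈ L, ∃ η > 0, ∀ u, t ≤ u → u < t + η → Q p u = Q p t) :
    ∃ η > 0, ∀ u, t ≤ u → u < t + η → ∀ p ∈ L, Q p u = Q p t := by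
  induction L with
  | nil => exact ⟨1, one_pos, fun u _ _ p hp => absurd hp (List.not_mem_nil)⟩
  | cons a L ih =>
    obtain ⟨ηa, hηa, ha⟩ := h a (List.mem_cons_self)
    obtain ⟨ηL, hηL, hL⟩ := ih (fun p hp => h p (List.mem_cons_of_mem a hp))
    refine ⟨min ηa ηL, lt_min hηa hηL, ?_⟩
    intro u hu1 hu2 p hp
    rcases List.mem_cons.mp hp with rfl | hp
    · exact ha u hu1 (by linarith [min_le_left ηa ηL])
    · exact hL u hu1 (by linarith [min_le_right ηa ηL]) p hp

lemma zg_right (hd : ∀ v k, k < (C.preds v).length → 0 < d v k ∧ C.chan v k = delayChannel (d v k) (b v k)) :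
    ∀ n : ℕ, ∀ v : C.V, ∀ t : ℝ, ∃ η > 0, ∀ u, t ≤ u → u < t + η →
      zg C d b n v u = zg C d b n v t := by
  intro n
  induction n with
  | zero => exact fun v t => ⟨1, one_pos, fun u _ _ => rfl⟩
  | succ n ih =>
    intro v t
    by_cases hv : C.inp v
    · exact ⟨1, one_pos, fun u _ _ => by rw [zg_succ_def, zg_succ_def, if_pos hv, if_pos hv]⟩
    · have hQ : ∀ p ∈ (C.preds v).zipIdx, ∃ η > 0, ∀ u, t ≤ u → u < t + η →
          (if u < d v p.2 then b v p.2 else zg C d b n p.1 (u - d v p.2)) =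
          (if t < d v p.2 then b v p.2 else zg C d b n p.1 (t - d v p.2)) := by
        intro p hp
        by_cases hlt : t < d v p.2
        · refine ⟨d v p.2 - t, by linarith, ?_⟩
          intro u hu1 hu2
          rw [if_pos (by linarith : u < d v p.2), if_pos hlt]
        · obtain ⟨η, hη, hc⟩ := ih p.1 (t - d v p.2)
          refine ⟨η, hη, ?_⟩
          intro u hu1 hu2
          rw [if_neg (by push_neg at hlt ⊢; linarith : ¬ u < d v p.2), if_neg hlt]
          exact hc (u - d v p.2) (by linarith) (by linarith)
      obtain ⟨η, hη, hc⟩ := exists_eta_list _ t _ hQ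
      refine ⟨η, hη, ?_⟩
      intro u hu1 hu2
      rw [zg_succ_def, zg_succ_def, if_neg hv, if_neg hv]
      congr 1
      apply List.map_congr_left
      intro p hp
      exact hc u hu1 hu2 p hp

lemma zeroExec_right
    (hd : ∀ v k, k < (C.preds v).length → 0 < d v k ∧ C.chan v k = delayChannel (d v k) (b v k))
    (hdm0 : 0 < dm) (hdml : ∀ v k, k < (C.preds v).length → dm ≤ d v k)
    (v : C.V) (t : ℝ) :
    ∃ η > 0, ∀ u, t ≤ u → u < t + η → zeroExec C d b dm v u = zeroExec C d b dm v t := by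
  set n := ⌈(t+1) / dm⌉₊ with hn
  have hb : t + 1 < ((n:ℝ)+1) * dm := nat_ceil_bound hdm0 (t+1)
  obtain ⟨η, hη, hc⟩ := zg_right hd (n+1) v t
  refine ⟨min η 1, lt_min hη one_pos, ?_⟩
  intro u hu1 hu2
  have hu3 : u < t + 1 := by linarith [min_le_right η (1:ℝ)]
  have hub : u < ((n:ℝ)+1) * dm := by linarith
  have htb : t < ((n:ℝ)+1) * dm := by linarith
  rw [zeroExec_eq hdm0 hdml hub, zeroExec_eq hdm0 hdml htb]
  exact hc u hu1 (by linarith [min_le_left η (1:ℝ)])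

lemma zconst (hdm0 : 0 < dm) (hdml : ∀ v k, k < (C.preds v).length → dm ≤ d v k) :
    ∀ n : ℕ, ∀ v : C.V, ∀ t t' : ℝ, t' ≤ t → t < (n : ℝ) * dm →
      (∀ c ∈ Sn C d n v, c ∉ Set.Ioc t' t) →
      zg C d b n v t' = zg C d b n v t := by
  intro n
  induction n with
  | zero => intro v t t' _ _ _; rfl
  | succ n ih =>
    intro v t t' htt htn hS
    rw [zg_succ_def, zg_succ_def]
    by_cases hv : C.inp v
    · rw [if_pos hv, if_pos hv]
    · rw [if_neg hv, if_neg hv]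
      congr 1
      apply List.map_congr_left
      intro p hp
      have hk := List.snd_lt_of_mem_zipIdx hp
      have hdmem : d v p.2 ∈ Sn C d (n+1) v := by
        show d v p.2 ∈ Sn C d (n+1) v
        rw [Sn]
        apply Finset.mem_biUnion.mpr
        exact ⟨p, List.mem_toFinset.mpr hp, Finset.mem_union_left _ (Finset.mem_singleton_self _)⟩
      by_cases hlt : t < d v p.2
      · rw [if_pos hlt, if_pos (lt_of_le_of_lt htt hlt)]
      · push_neg at hlt
        have hlt' : d v p.2 ≤ t' := by
          by_contra hh
          push_neg at hh
          exact hS (d v p.2) hdmem ⟨hh, hlt⟩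
        rw [if_neg (not_lt.mpr hlt), if_neg (not_lt.mpr hlt')]
        apply ih p.1 (t - d v p.2) (t' - d v p.2) (by linarith)
        · have hddm : dm ≤ d v p.2 := hdml v p.2 hk
          push_cast at htn ⊢
          linarith
        · intro c hc hmem
          have hcmem : c + d v p.2 ∈ Sn C d (n+1) v := by
            rw [Sn]
            apply Finset.mem_biUnion.mpr
            exact ⟨p, List.mem_toFinset.mpr hp,
              Finset.mem_union_right _ (Finset.mem_image.mpr ⟨c, hc, rfl⟩)⟩
          apply hS (c + d v p.2) hcmem
          simp only [Set.mem_Ioc] at hmem ⊢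
          constructor <;> linarith [hmem.1, hmem.2]

lemma zeroExec_const
    (hdm0 : 0 < dm) (hdml : ∀ v k, k < (C.preds v).length → dm ≤ d v k)
    {n : ℕ} {v : C.V} {t t' : ℝ} (htt : t' ≤ t) (htn : t < ((n:ℝ)+1) * dm)
    (hS : ∀ c ∈ Sn C d (n+1) v, c ∉ Set.Ioc t' t) :
    zeroExec C d b dm v t' = zeroExec C d b dm v t := by
  rw [zeroExec_eq hdm0 hdml htn, zeroExec_eq hdm0 hdml (lt_of_le_of_lt htt htn)]
  exact zconst hdm0 hdml (n+1) v t t' htt (by push_cast; linarith) hS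

lemma zeroExec_isSignal
    (hd : ∀ v k, k < (C.preds v).length → 0 < d v k ∧ C.chan v k = delayChannel (d v k) (b v k))
    (hdm0 : 0 < dm) (hdml : ∀ v k, k < (C.preds v).length → dm ≤ d v k)
    (v : C.V) : IsSignal (zeroExec C d b dm v) := by
  constructor
  · exact fun t => zeroExec_right hd hdm0 hdml v t
  · intro a' b'
    set n := ⌈(max b' 0) / dm⌉₊ with hn
    have hb : max b' 0 < ((n:ℝ)+1) * dm := nat_ceil_bound hdm0 _
    apply Set.Finite.subset (Sn C d (n+1) v).finite_toSet
    intro t ht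
    obtain ⟨ht1, ht2, ht3⟩ := ht
    by_contra htS
    obtain ⟨γ, hγ, hgap⟩ := finset_gap _ htS
    obtain ⟨u, hu1, hu2, hu3⟩ := ht3 γ hγ
    apply hu3
    apply zeroExec_const hdm0 hdml (le_of_lt hu2)
      (lt_of_le_of_lt (le_trans ht2 (le_max_left _ _)) hb)
    intro c hc hmem
    apply hgap c hc
    simp only [Set.mem_Ioc] at hmem ⊢
    exact ⟨by linarith [hmem.1], hmem.2⟩

lemma zeroExec_execution
    (hd : ∀ v k, k < (C.preds v).length → 0 < d v k ∧ C.chan v k = delayChannel (d v k) (b v k))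
    (hdm0 : 0 < dm) (hdml : ∀ v k, k < (C.preds v).length → dm ≤ d v k) :
    Execution C (zeroExec C d b dm) :=
  ⟨fun v => zeroExec_isSignal hd hdm0 hdml v,
   fun v hv t => zeroExec_gate hd hdm0 hdml hv t⟩

end SPF0

end CircuitPart


set_option maxHeartbeats 1000000 in
open SPF0 MeasureTheory in
/-- no circuit all of whose channels are positive constant-delay channels
solves Short-Pulse Filtration, i.e. satisfies (F2) well-formedness, (F3) no generation,
(F4) nontriviality and (F5) no short pulses. -/
theorem no_constant_delay_circuit_solves_SPF
    (C : Circuit) (i o : C.V)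
    (hi : C.inp i) (hiu : ∀ v, C.inp v → v = i)
    (ho : C.out o) (hou : ∀ v, C.out v → v = o)
    (hchan : ∀ (v : C.V) (k : ℕ), k < (C.preds v).length →
      ∃ d : ℝ, 0 < d ∧ ∃ b : Bool, C.chan v k = delayChannel d b) :
    ¬ ((∀ T Δ : ℝ, 0 ≤ T → 0 < Δ → ∃ s, Execution C s ∧ s i = Pulse T Δ) ∧
       (∀ s, Execution C s → (∀ t, s i t = false) → ∀ t, s o t = false) ∧
       (∃ T Δ : ℝ, 0 ≤ T ∧ 0 < Δ ∧
          ∀ s, Execution C s → s i = Pulse T Δ → ∃ t, s o t = true) ∧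
       (∃ ε : ℝ, 0 < ε ∧ ∀ s, Execution C s → ∀ T Δ : ℝ, Δ < ε →
          ¬ ContainsPulse (s o) T Δ)) := by
  classical
  letI : Fintype C.V := C.instFintype
  letI : DecidableEq C.V := C.instDecEq
  rintro ⟨F2, F3, ⟨T₀, Δ₀, hT₀, hΔ₀, F4⟩, ⟨ε, hε, F5⟩⟩
  -- choose the delays and initial values of the channels
  have hch : ∀ v k, ∃ p : ℝ × Bool, 0 < p.1 ∧
      (k < (C.preds v).length → C.chan v k = delayChannel p.1 p.2) := by
    intro v k
    by_cases h : k < (C.preds v).length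
    · obtain ⟨dd, hdd, bb, hbb⟩ := hchan v k h
      exact ⟨(dd, bb), hdd, fun _ => hbb⟩
    · exact ⟨(1, false), one_pos, fun hk => absurd hk h⟩
  set d : C.V → ℕ → ℝ := fun v k => (hch v k).choose.1 with hd_def
  set b : C.V → ℕ → Bool := fun v k => (hch v k).choose.2 with hb_def
  have hd : ∀ v k, k < (C.preds v).length →
      0 < d v k ∧ C.chan v k = delayChannel (d v k) (b v k) :=
    fun v k hk => ⟨(hch v k).choose_spec.1, (hch v k).choose_spec.2 hk⟩
  -- the minimum delay
  set DS : Finset ℝ :=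
    Finset.univ.biUnion (fun v : C.V => (Finset.range (C.preds v).length).image (d v)) with hDS
  set dm : ℝ := if hne : DS.Nonempty then min (DS.min' hne) 1 else 1 with hdm_def
  have hDSpos : ∀ x ∈ DS, 0 < x := by
    intro x hx
    simp only [hDS, Finset.mem_biUnion, Finset.mem_image, Finset.mem_range] at hx
    obtain ⟨v, -, k, hk, rfl⟩ := hx
    exact (hd v k hk).1
  have hdm0 : 0 < dm := by
    rw [hdm_def]
    split
    · next hne => exact lt_min (hDSpos _ (DS.min'_mem hne)) one_pos
    · exact one_pos
  have hdml : ∀ v k, k < (C.preds v).length → dm ≤ d v k := by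
    intro v k hk
    have hmem : d v k ∈ DS := by
      simp only [hDS, Finset.mem_biUnion, Finset.mem_image, Finset.mem_range]
      exact ⟨v, Finset.mem_univ v, k, hk, rfl⟩
    have hne : DS.Nonempty := ⟨_, hmem⟩
    rw [hdm_def, dif_pos hne]
    exact le_trans (min_le_left _ _) (DS.min'_le _ hmem)
  -- the output is not an input
  have hno : ¬ C.inp o := fun h => C.inp_not_out o ⟨h, ho⟩
  -- the zero execution
  set zE := zeroExec C d b dm with hzE_def
  have hzEex : Execution C zE := zeroExec_execution hd hdm0 hdml
  have hzEi : ∀ t, zE i t = false := fun t => zeroExec_inp hi t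
  have hzEo : ∀ t, zE o t = false := F3 zE hzEex hzEi
  -- output of any execution is false at negative times
  have out_neg : ∀ s, Execution C s → ∀ t : ℝ, t < 0 → s o t = false := by
    intro s hs t ht
    rw [exec_neg hd hs hno ht, ← exec_neg hd hzEex hno ht]
    exact hzEo t
  -- the chosen pulse executions
  have hex : ∀ Δ : ℝ, 0 < Δ → ∃ s, Execution C s ∧ s i = Pulse T₀ Δ :=
    fun Δ hΔ => F2 T₀ Δ hT₀ hΔ
  set E : ℝ → C.V → ℝ → Bool :=
    fun Δ => if h : 0 < Δ then (hex Δ h).choose else fun _ _ => false with hE_def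
  have hE : ∀ Δ : ℝ, 0 < Δ → Execution C (E Δ) ∧ (E Δ) i = Pulse T₀ Δ := by
    intro Δ h
    rw [hE_def]
    simp only [dif_pos h]
    exact (hex Δ h).choose_spec
  have hneg' : ∀ Δ : ℝ, 0 < Δ → ∀ u : ℝ, u < 0 → E Δ o u = false :=
    fun Δ h u hu => out_neg (E Δ) (hE Δ h).1 u hu
  have hF5' : ∀ Δ : ℝ, 0 < Δ → ∀ T Δ' : ℝ, Δ' < ε → ¬ ContainsPulse (E Δ o) T Δ' :=
    fun Δ h => F5 (E Δ) (hE Δ h).1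
  -- the witness time from F4
  obtain ⟨tstar, htstar⟩ := F4 (E Δ₀) (hE Δ₀ hΔ₀).1 (hE Δ₀ hΔ₀).2
  have htstar0 : 0 ≤ tstar := by
    by_contra h
    push_neg at h
    rw [out_neg (E Δ₀) (hE Δ₀ hΔ₀).1 tstar h] at htstar
    exact absurd htstar (by simp)
  -- the window
  set M : ℝ := tstar + ε with hM_def
  have hM0 : 0 < M := by positivity
  obtain ⟨n0, hn0⟩ := exists_nat_gt (M / dm)
  have hMn : M < (n0 : ℝ) * dm := by
    rw [div_lt_iff₀ hdm0] at hn0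
    linarith
  -- the measured quantity
  set OneS : ℝ → Set ℝ := fun Δ => {u : ℝ | E Δ o u = true ∧ u ∈ Set.Icc 0 M} with hOneS_def
  have hOsub : ∀ Δ, OneS Δ ⊆ Set.Icc 0 M := fun Δ u hu => hu.2
  have hOfin : ∀ Δ, volume (OneS Δ) ≠ ⊤ := by
    intro Δ
    refine ne_top_of_le_ne_top ?_ (measure_mono (hOsub Δ))
    rw [Real.volume_Icc]; exact ENNReal.ofReal_ne_top
  set h : ℝ → ℝ := fun Δ => (volume (OneS Δ)).toReal with hh_def
  have hnn : ∀ Δ, 0 ≤ h Δ := fun Δ => ENNReal.toReal_nonneg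
  -- lower bound at Δ₀
  have hlow : ε ≤ h Δ₀ := by
    have hsig : IsSignal (E Δ₀ o) := (hE Δ₀ hΔ₀).1.1 o
    rcases run_lemma hsig (hneg' Δ₀ hΔ₀) (hF5' Δ₀ hΔ₀) htstar (by linarith : tstar ≤ M)
      with hc | ⟨ra, rb, hra0, hrab, hrbM, hone⟩
    · have hsub : Set.Icc tstar M ⊆ OneS Δ₀ := by
        intro u hu
        exact ⟨hc u hu.1 hu.2, le_trans htstar0 hu.1, hu.2⟩
      have : volume (Set.Icc tstar M) ≤ volume (OneS Δ₀) := measure_mono hsub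
      rw [Real.volume_Icc] at this
      calc ε = (ENNReal.ofReal (M - tstar)).toReal := by
              rw [ENNReal.toReal_ofReal (by linarith)]; rw [hM_def]; ring
        _ ≤ h Δ₀ := ENNReal.toReal_mono (hOfin Δ₀) this
    · have hsub : Set.Ico ra rb ⊆ OneS Δ₀ := by
        intro u hu
        exact ⟨hone u hu.1 hu.2, le_trans hra0 hu.1, le_trans (le_of_lt hu.2) hrbM⟩
      have : volume (Set.Ico ra rb) ≤ volume (OneS Δ₀) := measure_mono hsub
      rw [Real.volume_Ico] at this
      calc ε ≤ (ENNReal.ofReal (rb - ra)).toReal := by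
              rw [ENNReal.toReal_ofReal (by linarith)]; linarith
        _ ≤ h Δ₀ := ENNReal.toReal_mono (hOfin Δ₀) this
  -- difference bound between executions
  have hdiff : ∀ s s' : C.V → ℝ → Bool, Execution C s → Execution C s' →
      ∀ x y : ℝ, (∀ u : ℝ, u ∉ Set.Ico x y → s i u = s' i u) →
      volume {u : ℝ | u ∈ Set.Icc 0 M ∧ s o u ≠ s' o u} ≤
        ((PDn C d n0 o).card : ENNReal) * ENNReal.ofReal (y - x) := by
    intro s s' hs hs' x y hagree
    have hsub : {u : ℝ | u ∈ Set.Icc 0 M ∧ s o u ≠ s' o u} ⊆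
        ⋃ δ ∈ PDn C d n0 o, Set.Ico (x + δ) (y + δ) := by
      rintro u ⟨⟨hu0, huM⟩, hne⟩
      obtain ⟨δ, hδmem, hδX⟩ := dep hd hdm0 hdml hiu hs hs' (Set.Ico x y) hagree
        n0 o u hu0 (lt_of_le_of_lt huM hMn) hne
      apply Set.mem_biUnion hδmem
      simp only [Set.mem_Ico] at hδX ⊢
      constructor <;> linarith [hδX.1, hδX.2]
    calc volume {u : ℝ | u ∈ Set.Icc 0 M ∧ s o u ≠ s' o u}
        ≤ volume (⋃ δ ∈ PDn C d n0 o, Set.Ico (x + δ) (y + δ)) := measure_mono hsub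
      _ ≤ ∑ δ ∈ PDn C d n0 o, volume (Set.Ico (x + δ) (y + δ)) :=
          measure_biUnion_finset_le _ _
      _ = ∑ δ ∈ PDn C d n0 o, ENNReal.ofReal (y - x) := by
          apply Finset.sum_congr rfl
          intro δ _
          rw [Real.volume_Ico]
          congr 1
          ring
      _ = ((PDn C d n0 o).card : ENNReal) * ENNReal.ofReal (y - x) := by
          rw [Finset.sum_const, nsmul_eq_mul]
  obtain ⟨N, hN0, hNc⟩ : ∃ N : ℝ, 0 < N ∧ ((PDn C d n0 o).card : ℝ) ≤ N :=
    ⟨((PDn C d n0 o).card : ℝ) + 1,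
      by have := Nat.cast_nonneg (α := ℝ) (PDn C d n0 o).card; linarith, by linarith⟩
  have hNne : N ≠ 0 := ne_of_gt hN0
  -- comparison of measures
  have hcomp : ∀ Δ Δ' : ℝ, 0 < Δ → 0 < Δ' → ∀ x y : ℝ, x ≤ y →
      (∀ u : ℝ, u ∉ Set.Ico x y → E Δ i u = E Δ' i u) →
      h Δ ≤ h Δ' + N * (y - x) := by
    intro Δ Δ' hΔ hΔ' x y hxy hagree
    have hsub : OneS Δ ⊆ OneS Δ' ∪ {u : ℝ | u ∈ Set.Icc 0 M ∧ E Δ o u ≠ E Δ' o u} := by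
      intro u hu
      by_cases hc : E Δ' o u = true
      · exact Or.inl ⟨hc, hu.2⟩
      · refine Or.inr ⟨hu.2, ?_⟩
        rw [hu.1, bool_ne_true hc]
        simp
    have hD := hdiff (E Δ) (E Δ') (hE Δ hΔ).1 (hE Δ' hΔ').1 x y hagree
    have hDfin : volume {u : ℝ | u ∈ Set.Icc 0 M ∧ E Δ o u ≠ E Δ' o u} ≠ ⊤ :=
      ne_top_of_le_ne_top (ENNReal.mul_ne_top (ENNReal.natCast_ne_top _)
        ENNReal.ofReal_ne_top) hD
    have hstep : volume (OneS Δ) ≤ volume (OneS Δ') +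
        volume {u : ℝ | u ∈ Set.Icc 0 M ∧ E Δ o u ≠ E Δ' o u} :=
      le_trans (measure_mono hsub) (measure_union_le _ _)
    have h1 : h Δ ≤ (volume (OneS Δ') +
        volume {u : ℝ | u ∈ Set.Icc 0 M ∧ E Δ o u ≠ E Δ' o u}).toReal :=
      ENNReal.toReal_mono (by
        exact ENNReal.add_ne_top.mpr ⟨hOfin Δ', hDfin⟩) hstep
    rw [ENNReal.toReal_add (hOfin Δ') hDfin] at h1
    have h2 : (volume {u : ℝ | u ∈ Set.Icc 0 M ∧ E Δ o u ≠ E Δ' o u}).toReal ≤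
        ((PDn C d n0 o).card : ℝ) * (y - x) := by
      have := ENNReal.toReal_mono (ENNReal.mul_ne_top (ENNReal.natCast_ne_top _)
        ENNReal.ofReal_ne_top) hD
      rwa [ENNReal.toReal_mul, ENNReal.toReal_natCast,
        ENNReal.toReal_ofReal (by linarith)] at this
    have h3 : ((PDn C d n0 o).card : ℝ) * (y - x) ≤ N * (y - x) :=
      mul_le_mul_of_nonneg_right hNc (by linarith)
    linarith
  -- agreement of pulses
  have pag1 : ∀ Δ Δ' : ℝ, Δ ≤ Δ' → ∀ u : ℝ, u ∉ Set.Ico (T₀+Δ) (T₀+Δ') →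
      Pulse T₀ Δ u = Pulse T₀ Δ' u := by
    intro Δ Δ' hΔΔ u hu
    simp only [Set.mem_Ico, not_and, not_lt] at hu
    unfold Pulse
    simp only [decide_eq_decide]
    rcases lt_or_ge u (T₀+Δ) with hc | hc
    · constructor
      · rintro ⟨h1, -⟩; exact ⟨h1, by linarith⟩
      · rintro ⟨h1, -⟩; exact ⟨h1, hc⟩
    · have := hu hc
      constructor
      · rintro ⟨-, h2⟩; exact absurd h2 (by linarith)
      · rintro ⟨-, h2⟩; exact absurd h2 (by linarith)
  have pag0 : ∀ Δ : ℝ, ∀ u : ℝ, u ∉ Set.Ico T₀ (T₀+Δ) → Pulse T₀ Δ u = false := by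
    intro Δ u hu
    simp only [Set.mem_Ico, not_and, not_lt] at hu
    unfold Pulse
    simp only [decide_eq_false_iff_not, not_and, not_lt]
    exact hu
  -- measure near zero
  have hz : ∀ Δ : ℝ, 0 < Δ → h Δ ≤ N * Δ := by
    intro Δ hΔ
    have hsub : OneS Δ ⊆ {u : ℝ | u ∈ Set.Icc 0 M ∧ E Δ o u ≠ zE o u} := by
      intro u hu
      refine ⟨hu.2, ?_⟩
      rw [hu.1, hzEo u]
      simp
    have hD := hdiff (E Δ) zE (hE Δ hΔ).1 hzEex T₀ (T₀+Δ) ?_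
    · have hle := le_trans (measure_mono hsub) hD
      have := ENNReal.toReal_mono (ENNReal.mul_ne_top (ENNReal.natCast_ne_top _)
        ENNReal.ofReal_ne_top) hle
      rw [ENNReal.toReal_mul, ENNReal.toReal_natCast,
        ENNReal.toReal_ofReal (by linarith)] at this
      calc h Δ ≤ ((PDn C d n0 o).card : ℝ) * (T₀ + Δ - T₀) := this
        _ = ((PDn C d n0 o).card : ℝ) * Δ := by ring_nf
        _ ≤ N * Δ := mul_le_mul_of_nonneg_right hNc (le_of_lt hΔ)
    · intro u hu
      rw [(hE Δ hΔ).2, hzEi u]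
      exact pag0 Δ u hu
  -- Lipschitz property
  have hLip : ∀ Δ Δ' : ℝ, 0 < Δ → Δ ≤ Δ' →
      h Δ ≤ h Δ' + N * (Δ' - Δ) ∧ h Δ' ≤ h Δ + N * (Δ' - Δ) := by
    intro Δ Δ' hΔ hΔΔ'
    have hΔ' : 0 < Δ' := lt_of_lt_of_le hΔ hΔΔ'
    have hagree : ∀ u : ℝ, u ∉ Set.Ico (T₀+Δ) (T₀+Δ') → E Δ i u = E Δ' i u := by
      intro u hu
      rw [(hE Δ hΔ).2, (hE Δ' hΔ').2]
      exact pag1 Δ Δ' hΔΔ' u hu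
    constructor
    · have := hcomp Δ Δ' hΔ hΔ' (T₀+Δ) (T₀+Δ') (by linarith) hagree
      calc h Δ ≤ h Δ' + N * (T₀ + Δ' - (T₀ + Δ)) := this
        _ = h Δ' + N * (Δ' - Δ) := by ring_nf
    · have := hcomp Δ' Δ hΔ' hΔ (T₀+Δ) (T₀+Δ') (by linarith)
        (fun u hu => (hagree u hu).symm)
      calc h Δ' ≤ h Δ + N * (T₀ + Δ' - (T₀ + Δ)) := this
        _ = h Δ + N * (Δ' - Δ) := by ring_nf
    -- threshold construction
  set Δa : ℝ := min Δ₀ (ε/(4*N)) with hΔa_def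
  have hΔa0 : 0 < Δa := lt_min hΔ₀ (div_pos hε (by linarith))
  have hΔaΔ₀ : Δa ≤ Δ₀ := min_le_left _ _
  have hhΔa : h Δa ≤ ε/4 := by
    have h1 := hz Δa hΔa0
    have h2 : N * Δa ≤ N * (ε/(4*N)) :=
      mul_le_mul_of_nonneg_left (min_le_right _ _) (le_of_lt hN0)
    have h3 : N * (ε/(4*N)) = ε/4 := by field_simp
    linarith
  set A : Set ℝ := {Δ : ℝ | Δ ∈ Set.Icc Δa Δ₀ ∧ h Δ ≤ ε/4} with hA_def
  have hAmem : Δa ∈ A := ⟨⟨le_refl _, hΔaΔ₀⟩, hhΔa⟩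
  have hAbdd : BddAbove A := ⟨Δ₀, fun x hx => hx.1.2⟩
  set q := sSup A with hq_def
  have hΔaq : Δa ≤ q := le_csSup hAbdd hAmem
  have hq0 : 0 < q := lt_of_lt_of_le hΔa0 hΔaq
  have hqΔ₀ : q ≤ Δ₀ := csSup_le ⟨Δa, hAmem⟩ (fun x hx => hx.1.2)
  have hhq : h q ≤ ε/4 := by
    apply le_of_forall_pos_le_add
    intro γ hγ
    obtain ⟨Δ, hΔA, hΔgt⟩ := exists_lt_of_lt_csSup ⟨Δa, hAmem⟩
      (show q - γ/N < q by
        have : 0 < γ/N := div_pos hγ hN0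
        linarith)
    have hΔq : Δ ≤ q := le_csSup hAbdd hΔA
    have hΔ0 : 0 < Δ := lt_of_lt_of_le hΔa0 hΔA.1.1
    have hlip := (hLip Δ q hΔ0 hΔq).2
    have h2 : N * (q - Δ) ≤ N * (γ/N) :=
      mul_le_mul_of_nonneg_left (by linarith) (le_of_lt hN0)
    have h3 : N * (γ/N) = γ := by field_simp
    linarith [hΔA.2]
  have hqlt : q < Δ₀ := by
    rcases eq_or_lt_of_le hqΔ₀ with he | hlt
    · exfalso; rw [he] at hhq; linarith
    · exact hlt
  set B : Set ℝ := {Δ : ℝ | Δ ∈ Set.Icc q Δ₀ ∧ ε/2 ≤ h Δ} with hB_def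
  have hBmem : Δ₀ ∈ B := ⟨⟨hqΔ₀, le_refl _⟩, by linarith⟩
  have hBbdd : BddBelow B := ⟨q, fun x hx => hx.1.1⟩
  set q' := sInf B with hq'_def
  have hqq' : q ≤ q' := le_csInf ⟨Δ₀, hBmem⟩ (fun x hx => hx.1.1)
  have hq'Δ₀ : q' ≤ Δ₀ := csInf_le hBbdd hBmem
  have hq'0 : 0 < q' := lt_of_lt_of_le hq0 hqq'
  have hhq' : ε/2 ≤ h q' := by
    apply le_of_forall_pos_le_add
    intro γ hγ
    obtain ⟨Δ, hΔB, hΔlt⟩ := exists_lt_of_csInf_lt ⟨Δ₀, hBmem⟩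
      (show sInf B < q' + γ/N by
        have : 0 < γ/N := div_pos hγ hN0
        rw [← hq'_def]
        linarith)
    have hq'Δ : q' ≤ Δ := csInf_le hBbdd hΔB
    have hlip := (hLip q' Δ hq'0 hq'Δ).2
    have h2 : N * (Δ - q') ≤ N * (γ/N) :=
      mul_le_mul_of_nonneg_left (by linarith) (le_of_lt hN0)
    have h3 : N * (γ/N) = γ := by field_simp
    linarith [hΔB.2]
  have hq'q : ε/(4*N) ≤ q' - q := by
    have hlip := (hLip q q' hq0 hqq').2
    have h4 : ε/4 ≤ N * (q' - q) := by linarith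
    rw [div_le_iff₀ (by linarith : (0:ℝ) < 4*N)]
    calc ε = 4*(ε/4) := by ring
      _ ≤ 4*(N*(q' - q)) := by linarith [h4]
      _ = (q' - q)*(4*N) := by ring
  have hmid : ∀ Δ : ℝ, q < Δ → Δ < q' → ε/4 < h Δ ∧ h Δ < ε/2 := by
    intro Δ h1 h2
    constructor
    · by_contra hcon
      push_neg at hcon
      have : Δ ∈ A := ⟨⟨le_of_lt (lt_of_le_of_lt hΔaq h1), le_trans (le_of_lt h2) hq'Δ₀⟩, hcon⟩
      exact absurd (le_csSup hAbdd this) (not_le.mpr h1)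
    · by_contra hcon
      push_neg at hcon
      have : Δ ∈ B := ⟨⟨le_of_lt h1, le_trans (le_of_lt h2) hq'Δ₀⟩, hcon⟩
      exact absurd (csInf_le hBbdd this) (not_le.mpr h2)
  -- the structure of the measure in the middle region
  set G0 : Finset ℝ := (K0n C d T₀ n0 o).image (fun c => M - c) with hG0_def
  set G1 : Finset ℝ := (K1n C d T₀ n0 o).image (fun c => M - c) with hG1_def
  have hstruct : ∀ Δ : ℝ, q < Δ → Δ < q' → h Δ ∈ G0 ∨ h Δ + Δ ∈ G1 := by
    intro Δ h1 h2
    have hΔ0 : 0 < Δ := lt_trans hq0 h1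
    obtain ⟨hm1, hm2⟩ := hmid Δ h1 h2
    have hsig : IsSignal (E Δ o) := (hE Δ hΔ0).1.1 o
    have hrfl : h Δ = (volume {u : ℝ | E Δ o u = true ∧ u ∈ Set.Icc 0 M}).toReal := rfl
    obtain ⟨a, ha0, haM, hOeq, hzero, htrans⟩ :=
      one_set_structure hsig (hneg' Δ hΔ0) (hF5' Δ hΔ0)
        (by rw [← hrfl]; linarith) (by rw [← hrfl]; linarith)
    have hheq : h Δ = M - a := by
      rw [hrfl, hOeq, Real.volume_Icc, ENNReal.toReal_ofReal (by linarith)]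
    set KK : Finset ℝ := K0n C d T₀ n0 o ∪ (K1n C d T₀ n0 o).image (fun c => c + Δ) with hKK_def
    have haKK : a ∈ KK := by
      by_contra hnot
      obtain ⟨γ, hγ, hgap⟩ := finset_gap KK hnot
      obtain ⟨u, hu1, hu2, hu3⟩ := htrans γ hγ
      apply hu3
      apply trconst hd hdm0 hdml hiu hT₀ (hE Δ hΔ0).1 (hE Δ hΔ0).2 n0 o a u (le_of_lt hu2)
        (lt_trans haM hMn)
      · intro c hc hmem
        refine hgap c (Finset.mem_union_left _ hc) ?_
        simp only [Set.mem_Ioc] at hmem ⊢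
        exact ⟨by linarith [hmem.1], hmem.2⟩
      · intro c hc hmem
        refine hgap (c + Δ) (Finset.mem_union_right _ (Finset.mem_image.mpr ⟨c, hc, rfl⟩)) ?_
        simp only [Set.mem_Ioc] at hmem ⊢
        exact ⟨by linarith [hmem.1], hmem.2⟩
    rcases Finset.mem_union.mp haKK with hk0 | hk1
    · left
      rw [hheq]
      exact Finset.mem_image.mpr ⟨a, hk0, rfl⟩
    · right
      obtain ⟨c, hc, hca⟩ := Finset.mem_image.mp hk1
      have heq2 : h Δ + Δ = M - c := by rw [hheq, ← hca]; ring
      rw [heq2]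
      exact Finset.mem_image.mpr ⟨c, hc, rfl⟩
  -- final contradiction via monotone structure
  have hqq'pos : 0 < q' - q := lt_of_lt_of_le (div_pos hε (by linarith)) hq'q
  set ρ : ℝ := min ((q' - q)/4) (ε/(16*N)) with hρ_def
  have hρ0 : 0 < ρ := lt_min (by linarith) (div_pos hε (by linarith))
  set Δ1 := q + ρ with hΔ1_def
  set Δ2 := q' - ρ with hΔ2_def
  have hΔ1q : q < Δ1 := by rw [hΔ1_def]; linarith
  have hΔ2q' : Δ2 < q' := by rw [hΔ2_def]; linarith
  have hΔ12 : Δ1 < Δ2 := by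
    have h1 : ρ ≤ (q' - q)/4 := min_le_left _ _
    rw [hΔ1_def, hΔ2_def]; linarith
  have hqΔ2 : q < Δ2 := lt_trans hΔ1q hΔ12
  have hΔ10 : 0 < Δ1 := lt_trans hq0 hΔ1q
  have hρN : N * ρ ≤ ε/16 := by
    have h1 : ρ ≤ ε/(16*N) := min_le_right _ _
    have h2 : N * ρ ≤ N * (ε/(16*N)) := mul_le_mul_of_nonneg_left h1 (le_of_lt hN0)
    have h3 : N * (ε/(16*N)) = ε/16 := by field_simp
    linarith
  have hhΔ1 : h Δ1 ≤ ε/4 + ε/16 := by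
    have hlip := (hLip q Δ1 hq0 (le_of_lt hΔ1q)).2
    have he : Δ1 - q = ρ := by rw [hΔ1_def]; ring
    rw [he] at hlip
    linarith
  have hhΔ2 : ε/2 - ε/16 ≤ h Δ2 := by
    have hlip := (hLip Δ2 q' (lt_trans hq0 hqΔ2) (le_of_lt hΔ2q')).2
    have he : q' - Δ2 = ρ := by rw [hΔ2_def]; ring
    rw [he] at hlip
    linarith
  have h12 : h Δ1 < h Δ2 := by linarith
  set W : Set ℝ := {Δ : ℝ | Δ ∈ Set.Icc Δ1 Δ2 ∧ h Δ ≤ h Δ1} with hW_def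
  have hWmem : Δ1 ∈ W := ⟨⟨le_refl _, le_of_lt hΔ12⟩, le_refl _⟩
  have hWbdd : BddAbove W := ⟨Δ2, fun x hx => hx.1.2⟩
  set w := sSup W with hw_def
  have hΔ1w : Δ1 ≤ w := le_csSup hWbdd hWmem
  have hwΔ2 : w ≤ Δ2 := csSup_le ⟨Δ1, hWmem⟩ (fun x hx => hx.1.2)
  have hw0 : 0 < w := lt_of_lt_of_le hΔ10 hΔ1w
  have hhw : h w ≤ h Δ1 := by
    apply le_of_forall_pos_le_add
    intro γ hγ
    obtain ⟨Δ, hΔW, hΔgt⟩ := exists_lt_of_lt_csSup ⟨Δ1, hWmem⟩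
      (show w - γ/N < w by
        have : 0 < γ/N := div_pos hγ hN0
        linarith)
    have hΔw : Δ ≤ w := le_csSup hWbdd hΔW
    have hΔpos : 0 < Δ := lt_of_lt_of_le hΔ10 hΔW.1.1
    have hlip := (hLip Δ w hΔpos hΔw).2
    have h2 : N * (w - Δ) ≤ N * (γ/N) := mul_le_mul_of_nonneg_left (by linarith) (le_of_lt hN0)
    have h3 : N * (γ/N) = γ := by field_simp
    linarith [hΔW.2]
  have hwΔ2' : w < Δ2 := by
    rcases eq_or_lt_of_le hwΔ2 with he | hlt
    · exfalso; rw [he] at hhw; linarith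
    · exact hlt
  have habove : ∀ Δ : ℝ, w < Δ → Δ ≤ Δ2 → h Δ1 < h Δ := by
    intro Δ h1 h2
    by_contra hcon
    push_neg at hcon
    have : Δ ∈ W := ⟨⟨le_trans hΔ1w (le_of_lt h1), h2⟩, hcon⟩
    exact absurd (le_csSup hWbdd this) (not_le.mpr h1)
  obtain ⟨ρa, hρa, hsepa⟩ := finset_sep G0 (h w)
  obtain ⟨ρb, hρb, hsepb⟩ := finset_sep G1 (h w + w)
  set ρ₁ := min ρa ρb with hρ₁_def
  have hρ₁0 : 0 < ρ₁ := lt_min hρa hρb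
  set η := min ((Δ2 - w)/2) (ρ₁/(2*(N+1))) with hη_def
  have hη0 : 0 < η := lt_min (by linarith) (div_pos hρ₁0 (by linarith))
  set Δ3 := w + η with hΔ3_def
  have hwΔ3 : w < Δ3 := by rw [hΔ3_def]; linarith
  have hΔ3Δ2 : Δ3 ≤ Δ2 := by
    have h1 : η ≤ (Δ2 - w)/2 := min_le_left _ _
    rw [hΔ3_def]; linarith
  have hqΔ3 : q < Δ3 := lt_trans (lt_of_lt_of_le hΔ1q hΔ1w) hwΔ3
  have hΔ3q' : Δ3 < q' := lt_of_le_of_lt hΔ3Δ2 hΔ2q'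
  have hupΔ3 : h Δ1 < h Δ3 := habove Δ3 hwΔ3 hΔ3Δ2
  have hwlt3 : h w < h Δ3 := lt_of_le_of_lt hhw hupΔ3
  have hLip3 : h Δ3 ≤ h w + N * η := by
    have hlip := (hLip w Δ3 hw0 (le_of_lt hwΔ3)).2
    have he : Δ3 - w = η := by rw [hΔ3_def]; ring
    rw [he] at hlip
    exact hlip
  have hηρ₁ : η ≤ ρ₁/(2*(N+1)) := min_le_right _ _
  have hN1 : (0:ℝ) < N + 1 := by linarith
  have hkey : (N+1) * η ≤ ρ₁/2 := by
    have hmul := mul_le_mul_of_nonneg_left hηρ₁ (le_of_lt hN1)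
    have heq : (N+1) * (ρ₁/(2*(N+1))) = ρ₁/2 := by
      field_simp
    linarith
  rcases hstruct Δ3 hqΔ3 hΔ3q' with hc0 | hc1
  · have hne : h Δ3 ≠ h w := ne_of_gt hwlt3
    have hchain := hsepa (h Δ3) hc0 hne
    rw [abs_of_pos (by linarith : (0:ℝ) < h Δ3 - h w)] at hchain
    have h2 : ρ₁ ≤ ρa := min_le_left _ _
    have h5 : N * η ≤ (N+1) * η :=
      mul_le_mul_of_nonneg_right (by linarith) (le_of_lt hη0)
    linarith
  · rcases eq_or_ne (h Δ3 + Δ3) (h w + w) with he | hne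
    · have : h Δ3 = h w - η := by
        rw [hΔ3_def] at he
        linarith
      linarith
    · have hchain := hsepb (h Δ3 + Δ3) hc1 hne
      have habs : |h Δ3 + Δ3 - (h w + w)| = (h Δ3 - h w) + η := by
        rw [abs_of_pos]
        · rw [hΔ3_def]; ring
        · rw [hΔ3_def]; linarith [hwlt3, hη0]
      rw [habs] at hchain
      have h2 : ρ₁ ≤ ρb := min_le_right _ _
      have h5 : N * η + η = (N+1) * η := by ring
      linarith
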